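/- arXiv:1910.07797 — 7 statements merged into one kernel-verified Lean document; each statement's English description precedes it below -/
import Mathlib

section
/- Let Λ = {λ₁,...,λ_K} ⊂ ℂ be a finite set of distinct complex numbers satisfying the XXX Bethe equations: for each i, (λᵢ + i/2)^L · ∏_{j≠i}(λᵢ - λⱼ - i) = (λᵢ - i/2)^L · ∏_{j≠i}(λᵢ - λⱼ + i). If there exist indices i₁, i₂ with λ_{i₁} - λ_{i₂} = i, then λ_{i₁} = i/2 and λ_{i₂} = -i/2. In other words, the only possible 'center of strings' s (with s + i/2 ∈ Λ and s - i/2 ∈ Λ) is s = 0. -/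
/-! If `λ` and `λ - i` are both roots, the left side of the Bethe equation at `λ` vanishes, hence so
does its right side: either `λ = i/2` or `λ + i` is again a root. Finitely many roots cannot
contain an infinite ladder `λ, λ + i, λ + 2i, …`, so climbing must stop at `i/2`, i.e.
`λ = i/2 - m i` with `m : ℕ`. The equations are invariant under `λ ↦ -λ`, so dually the lower
root satisfies `λ - i = -i/2 + n i`. Comparing the two gives `m + n = 0`. -/

open Complex Finset

theorem Set.Finite.exists_add_nsmul_eq_of_forall_eq_or_add_mem {M : Type*} [AddCommGroup M]
    [IsAddTorsionFree M] {T : Set M} (hT : T.Finite) {c d : M} (hd : d ≠ 0)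
    (hstep : ∀ z ∈ T, z = c ∨ z + d ∈ T) {z : M} (hz : z ∈ T) : ∃ n : ℕ, z + n • d = c := by
  by_contra! hne
  have hmem : ∀ n : ℕ, z + n • d ∈ T := by
    intro n
    induction n with
    | zero => simpa using hz
    | succ n ih => simpa [succ_nsmul, add_assoc] using (hstep _ ih).resolve_left (hne n)
  refine Set.infinite_of_injective_forall_mem (fun m n h => ?_) hmem hT
  have hsmul : ((m : ℤ) - n) • d = 0 := by
    rw [sub_smul, natCast_zsmul, natCast_zsmul, add_left_cancel h, sub_self]
  simpa [sub_eq_zero, hd] using hsmul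

section Bethe

variable {ι : Type*} [Fintype ι] [DecidableEq ι] {L : ℕ} {l : ι → ℂ}

def IsBetheRoots (L : ℕ) (l : ι → ℂ) : Prop :=
  ∀ i, (l i + I / 2) ^ L * ∏ j ∈ univ.erase i, (l i - l j - I) =
    (l i - I / 2) ^ L * ∏ j ∈ univ.erase i, (l i - l j + I)

theorem prod_erase_sub_add_eq_zero_iff {c : ℂ} (hc : c ≠ 0) (i : ι) :
    ∏ j ∈ univ.erase i, (l i - l j + c) = 0 ↔ l i + c ∈ Set.range l := by
  rw [prod_eq_zero_iff]
  constructor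
  · rintro ⟨j, -, hzero⟩
    exact ⟨j, by linear_combination -hzero⟩
  · rintro ⟨j, hlj⟩
    refine ⟨j, mem_erase.2 ⟨fun hji => hc ?_, mem_univ j⟩, by linear_combination -hlj⟩
    subst hji
    linear_combination -hlj

theorem IsBetheRoots.neg (hB : IsBetheRoots L l) : IsBetheRoots L (-l) := by
  intro i
  have hprod_sub (c : ℂ) : ∏ j ∈ univ.erase i, ((-l) i - (-l) j - c) =
      (-1) ^ #(univ.erase i) * ∏ j ∈ univ.erase i, (l i - l j + c) := by
    rw [← prod_neg]; exact prod_congr rfl fun j _ => by simp only [Pi.neg_apply]; ring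
  have hprod_add (c : ℂ) : ∏ j ∈ univ.erase i, ((-l) i - (-l) j + c) =
      (-1) ^ #(univ.erase i) * ∏ j ∈ univ.erase i, (l i - l j - c) := by
    rw [← prod_neg]; exact prod_congr rfl fun j _ => by simp only [Pi.neg_apply]; ring
  rw [hprod_sub, hprod_add]
  simp only [Pi.neg_apply]
  rw [show -l i + I / 2 = -(l i - I / 2) by ring,
    show -l i - I / 2 = -(l i + I / 2) by ring,
    neg_pow (l i - I / 2), neg_pow (l i + I / 2)]
  linear_combination (-1) ^ L * (-1) ^ #(univ.erase i) * (hB i).symm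

theorem IsBetheRoots.eq_half_I_or_add_I_mem (hB : IsBetheRoots L l) (hL : L ≠ 0) {i : ι}
    (hi : l i - I ∈ Set.range l) : l i = I / 2 ∨ l i + I ∈ Set.range l := by
  have hleft : ∏ j ∈ univ.erase i, (l i - l j - I) = 0 := by
    simpa only [← sub_eq_add_neg] using
      (prod_erase_sub_add_eq_zero_iff (neg_ne_zero.2 I_ne_zero) i).2 (by rwa [← sub_eq_add_neg])
  have := hB i
  rwa [hleft, mul_zero, eq_comm, mul_eq_zero, pow_eq_zero_iff hL, sub_eq_zero,
    prod_erase_sub_add_eq_zero_iff I_ne_zero] at this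

theorem IsBetheRoots.exists_add_nsmul_I_eq_half_I (hB : IsBetheRoots L l) (hL : L ≠ 0) {i : ι}
    (hi : l i - I ∈ Set.range l) : ∃ n : ℕ, l i + n • I = I / 2 := by
  refine ((Set.finite_range l).subset (Set.sep_subset _ fun z => z - I ∈ Set.range l)
    ).exists_add_nsmul_eq_of_forall_eq_or_add_mem I_ne_zero ?_ ⟨⟨i, rfl⟩, hi⟩
  rintro _ ⟨⟨j, rfl⟩, hj⟩
  exact (hB.eq_half_I_or_add_I_mem hL hj).imp_right fun h => ⟨h, by simp⟩

end Bethe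

theorem xxx_string_center_is_zero_general (L K : ℕ) (hL : 1 ≤ L)
    (l : Fin K → ℂ)
    (hBethe : ∀ i : Fin K,
      (l i + I / 2) ^ L * ∏ j ∈ univ.erase i, (l i - l j - I) =
      (l i - I / 2) ^ L * ∏ j ∈ univ.erase i, (l i - l j + I)) :
    ∀ i₁ i₂ : Fin K, l i₁ - l i₂ = I → l i₁ = I / 2 ∧ l i₂ = -(I / 2) := by
  intro i₁ i₂ h
  have hL0 : L ≠ 0 := by omega
  have hB : IsBetheRoots L l := hBethe
  obtain ⟨m, hm⟩ := hB.exists_add_nsmul_I_eq_half_I hL0 (i := i₁) ⟨i₂, by linear_combination -h⟩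
  obtain ⟨n, hn⟩ := hB.neg.exists_add_nsmul_I_eq_half_I hL0 (i := i₂)
    ⟨i₁, by simp only [Pi.neg_apply]; linear_combination -h⟩
  simp only [nsmul_eq_mul, Pi.neg_apply] at hm hn
  have hmn : (m + n : ℂ) * I = 0 := by linear_combination hm + hn - h
  obtain ⟨rfl, rfl⟩ : m = 0 ∧ n = 0 := by
    rw [← Nat.add_eq_zero_iff]; exact_mod_cast (mul_eq_zero.1 hmn).resolve_right I_ne_zero
  constructor
  · linear_combination hm
  · linear_combination -hn

/-- Property 1 of the paper: for distinct solutions of the (denominator-cleared)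
XXX Bethe equations, the only possible string center is 0: if two roots differ
by `i`, they must be `i/2` and `-i/2`. -/
theorem xxx_string_center_is_zero (L K : ℕ) (hL : 1 ≤ L) (hK : 1 ≤ K)
    (l : Fin K → ℂ) (hdist : Function.Injective l)
    (hBethe : ∀ i : Fin K,
      (l i + I / 2) ^ L * ∏ j ∈ univ.erase i, (l i - l j - I) =
      (l i - I / 2) ^ L * ∏ j ∈ univ.erase i, (l i - l j + I)) :
    ∀ i₁ i₂ : Fin K, l i₁ - l i₂ = I → l i₁ = I / 2 ∧ l i₂ = -(I / 2) :=
  xxx_string_center_is_zero_general L K hL l hBethe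
end

section
/- Suppose Q(λ) ∈ ℂ[λ] is monic with simple roots and there exists a polynomial P(λ) satisfying P(λ + i/2)Q(λ - i/2) - P(λ - i/2)Q(λ + i/2) = λ^L. Then every root λ₀ of Q with λ₀ ∉ {i/2, -i/2} satisfies the Bethe equation (λ₀ + i/2)^L ∏_{roots μ ≠ λ₀}(λ₀ - μ - i) = (λ₀ - i/2)^L ∏_{roots μ ≠ λ₀}(λ₀ - μ + i), provided gcd(P, Q) = 1. -/
open Complex Polynomial Finset

/-!
Evaluating the Wronskian relation at `λ₀ ± i/2` for a root `λ₀` of `Q` kills one of its two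
terms each time, leaving `(λ₀ + i/2)^L = -P(λ₀) Q(λ₀ + i)` and `(λ₀ - i/2)^L = P(λ₀) Q(λ₀ - i)`.
Writing `Q = (X - λ₀) S`, the factor `P(λ₀)` appears on both sides after cross-multiplication,
so the Bethe equation holds in its polynomial (undivided) form.
-/

section ShiftWronskian

variable {R : Type*} [CommRing R]

noncomputable def shiftWronskian (a : R) (P Q : R[X]) : R[X] :=
  P.comp (X + C a) * Q.comp (X - C a) - P.comp (X - C a) * Q.comp (X + C a)

variable {a r : R} {P Q : R[X]}

theorem eval_add_shiftWronskian_of_isRoot (hr : Q.IsRoot r) :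
    (shiftWronskian a P Q).eval (r + a) = -(P.eval r * Q.eval (r + a + a)) := by
  simp only [shiftWronskian, eval_sub, eval_mul, eval_comp, eval_add, eval_X, eval_C,
    add_sub_cancel_right, hr.eq_zero]
  ring

theorem eval_sub_shiftWronskian_of_isRoot (hr : Q.IsRoot r) :
    (shiftWronskian a P Q).eval (r - a) = P.eval r * Q.eval (r - a - a) := by
  simp only [shiftWronskian, eval_sub, eval_mul, eval_comp, eval_add, eval_X, eval_C,
    sub_add_cancel, hr.eq_zero]
  ring

theorem eval_shiftWronskian_mul_eval_eq {S : R[X]} (hQ : Q = (X - C r) * S) :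
    (shiftWronskian a P Q).eval (r + a) * S.eval (r - a - a) =
      (shiftWronskian a P Q).eval (r - a) * S.eval (r + a + a) := by
  have hr : Q.IsRoot r := by simp [hQ]
  rw [eval_add_shiftWronskian_of_isRoot hr, eval_sub_shiftWronskian_of_isRoot hr, hQ]
  simp only [eval_mul, eval_sub, eval_X, eval_C]
  ring

end ShiftWronskian

theorem bethe_from_wronskian_general (L K : ℕ)
    (l : Fin K → ℂ)
    (Q P : Polynomial ℂ) (hQ : Q = ∏ k : Fin K, (X - C (l k)))
    (hW : P.comp (X + C (I / 2)) * Q.comp (X - C (I / 2)) -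
          P.comp (X - C (I / 2)) * Q.comp (X + C (I / 2)) = X ^ L) :
    ∀ k : Fin K, l k ≠ I / 2 → l k ≠ -(I / 2) →
      (l k + I / 2) ^ L * ∏ j ∈ univ.erase k, (l k - l j - I) =
      (l k - I / 2) ^ L * ∏ j ∈ univ.erase k, (l k - l j + I) := by
  intro k _ _
  have hfactor : Q = (X - C (l k)) * ∏ j ∈ univ.erase k, (X - C (l j)) :=
    hQ.trans (mul_prod_erase univ _ (mem_univ k)).symm
  have hbethe := eval_shiftWronskian_mul_eval_eq (a := I / 2) (P := P) hfactor
  rw [shiftWronskian, hW] at hbethe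
  simp only [eval_pow, eval_X, eval_prod, eval_sub, eval_C] at hbethe
  convert hbethe using 2 <;> refine prod_congr rfl fun j _ => ?_ <;> ring

/-- If `Q = ∏ (λ - λ_k)` (distinct roots) admits a coprime polynomial partner
`P` in the Wronskian relation `P(λ+i/2)Q(λ-i/2) - P(λ-i/2)Q(λ+i/2) = λ^L`,
then every root `λ₀ ∉ {i/2, -i/2}` of `Q` satisfies the Bethe equation. -/
theorem bethe_from_wronskian (L K : ℕ) (hL : 0 < L)
    (l : Fin K → ℂ) (hdist : Function.Injective l)
    (Q P : Polynomial ℂ) (hQ : Q = ∏ k : Fin K, (X - C (l k)))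
    (hW : P.comp (X + C (I / 2)) * Q.comp (X - C (I / 2)) -
          P.comp (X - C (I / 2)) * Q.comp (X + C (I / 2)) = X ^ L)
    (hcop : IsCoprime P Q) :
    ∀ k : Fin K, l k ≠ I / 2 → l k ≠ -(I / 2) →
      (l k + I / 2) ^ L * ∏ j ∈ univ.erase k, (l k - l j - I) =
      (l k - I / 2) ^ L * ∏ j ∈ univ.erase k, (l k - l j + I) :=
  bethe_from_wronskian_general L K l Q P hQ hW
end

section
/- For L = 5 and Q(λ) = λ² + 1/4, there is no polynomial P(λ) ∈ ℂ[λ] satisfying P(λ + i/2)Q(λ - i/2) - P(λ - i/2)Q(λ + i/2) = λ⁵. -/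
/-!
Write `Q = λ² + 1/4 = (λ - η)(λ + η)` with `η = i/2`. Then `Q(λ ∓ η) = λ(λ ∓ 2η)`, so the
Wronskian is `λ · S(λ)` with `S(λ) = (λ - 2η) P(λ + η) - (λ + 2η) P(λ - η)`. Evaluating `S` at
`2η`, `-2η` and `0` shows that, whatever `P` is, `2 S(0) = S(2η) + S(-2η)`. For the right-hand side
`λ⁵` we need `S = λ⁴`, and `2 · 0⁴ ≠ (2η)⁴ + (-2η)⁴ = 2`.
-/

open Complex Polynomial

namespace Polynomial

variable {R : Type*} [CommRing R]

noncomputable def quantumWronskian (η : R) (P Q : R[X]) : R[X] :=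
  P.comp (X + C η) * Q.comp (X - C η) - P.comp (X - C η) * Q.comp (X + C η)

theorem quantumWronskian_X_sq_sub_C_sq (η : R) (P : R[X]) :
    quantumWronskian η P (X ^ 2 - C (η ^ 2)) =
      X * ((X - C (2 * η)) * P.comp (X + C η) - (X + C (2 * η)) * P.comp (X - C η)) := by
  simp only [quantumWronskian, sub_comp, pow_comp, X_comp, C_comp, C_mul, C_pow, C_ofNat]
  ring

theorem two_mul_eval_zero_of_quantumWronskian_X_sq_sub_C_sq_eq_X_mul {η : R} {P S : R[X]}
    (h : quantumWronskian η P (X ^ 2 - C (η ^ 2)) = X * S) :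
    2 * S.eval 0 = S.eval (2 * η) + S.eval (-(2 * η)) := by
  rw [quantumWronskian_X_sq_sub_C_sq] at h
  rw [← isRegular_X.left h]
  simp only [eval_sub, eval_add, eval_mul, eval_comp, eval_X, eval_C]
  ring_nf

end Polynomial

/-- For `L = 5` and `Q(λ) = λ² + 1/4`, no polynomial `P` satisfies the
Wronskian relation `P(λ+i/2)Q(λ-i/2) - P(λ-i/2)Q(λ+i/2) = λ⁵`. -/
theorem no_polynomial_partner_L5 :
    ¬ ∃ P : Polynomial ℂ,
      P.comp (X + C (I / 2)) * (X ^ 2 + C (1 / 4) : Polynomial ℂ).comp (X - C (I / 2)) -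
        P.comp (X - C (I / 2)) * (X ^ 2 + C (1 / 4) : Polynomial ℂ).comp (X + C (I / 2)) =
        X ^ 5 := by
  rintro ⟨P, h⟩
  have hQ : (X ^ 2 + C (1 / 4) : ℂ[X]) = X ^ 2 - C ((I / 2) ^ 2) := by
    rw [sub_eq_add_neg, ← C_neg, div_pow, I_sq]
    norm_num
  have hW : quantumWronskian (I / 2) P (X ^ 2 - C ((I / 2) ^ 2)) = X * X ^ 4 := by
    rw [← hQ, ← pow_succ']
    exact h
  have key := two_mul_eval_zero_of_quantumWronskian_X_sq_sub_C_sq_eq_X_mul hW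
  norm_num [mul_div_cancel₀, neg_pow, I_pow_four] at key
end

section
/- Let Q ∈ ℂ[λ] with Q(i/2) = Q(-i/2) = 0 and suppose P ∈ ℂ[λ] satisfies P(λ + i/2)Q(λ - i/2) - P(λ - i/2)Q(λ + i/2) = λ^L with L odd. Then, setting Q'(λ) := Q(λ + i/2) - Q(λ - i/2) and P'(λ) := P(λ + i/2) - P(λ - i/2), the identity W₁(λ) := Q'(λ - i/2)P'(λ + i/2) - Q'(λ + i/2)P'(λ - i/2) = (λ + i/2)^L + (λ - i/2)^L - T₀(λ) holds, where T₀(λ) = P(λ + i)Q(λ - i) - P(λ - i)Q(λ + i). -/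
/-!
Write `W_a(P, Q)(λ) = P(λ+a)Q(λ-a) - P(λ-a)Q(λ+a)`. Expanding `W_a` of the central differences
of `P` and `Q` gives eight products; the two copies of `P(λ)Q(λ)` cancel and the other six
regroup as `W_a(λ+a) + W_a(λ-a) - W_{2a}(λ)`. With `a = i/2` we have `W_a = λ^L` and `W_{2a} = T₀`.
-/

open Complex Polynomial

namespace Polynomial

variable {R : Type*} [CommRing R]

noncomputable def discreteWronskian (a : R) (P Q : R[X]) : R[X] :=
  P.comp (X + C a) * Q.comp (X - C a) - P.comp (X - C a) * Q.comp (X + C a)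

noncomputable def centralDifference (a : R) (f : R[X]) : R[X] :=
  f.comp (X + C a) - f.comp (X - C a)

lemma comp_X_add_C_comp_X_add_C (f : R[X]) (a b : R) :
    (f.comp (X + C a)).comp (X + C b) = f.comp (X + C (a + b)) := by
  rw [comp_assoc, add_comp, X_comp, C_comp, C_add, add_assoc, add_comm (C b)]

lemma comp_X_sub_C_eq_comp_X_add_C (f : R[X]) (a : R) :
    f.comp (X - C a) = f.comp (X + C (-a)) := by
  rw [C_neg, sub_eq_add_neg]

theorem discreteWronskian_centralDifference (a : R) (P Q : R[X]) :
    discreteWronskian a (centralDifference a P) (centralDifference a Q) =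
      (discreteWronskian a P Q).comp (X + C a) + (discreteWronskian a P Q).comp (X - C a) -
        discreteWronskian (2 * a) P Q := by
  simp only [discreteWronskian, centralDifference, comp_X_sub_C_eq_comp_X_add_C, sub_comp,
    mul_comp, comp_X_add_C_comp_X_add_C, add_neg_cancel, neg_add_cancel, C_0, add_zero, comp_X]
  rw [← two_mul, ← neg_add, ← two_mul]
  ring

end Polynomial

/-- If `P, Q` satisfy the Wronskian relation `P(λ+i/2)Q(λ-i/2) - P(λ-i/2)Q(λ+i/2) = λ^L`,
then the discrete Wronskian of `Q'(λ) = Q(λ+i/2) - Q(λ-i/2)` and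
`P'(λ) = P(λ+i/2) - P(λ-i/2)` equals `(λ+i/2)^L + (λ-i/2)^L - T₀(λ)`, where
`T₀(λ) = P(λ+i)Q(λ-i) - P(λ-i)Q(λ+i)`. -/
theorem W1_identity (L : ℕ) (P Q : Polynomial ℂ)
    (hW : P.comp (X + C (I / 2)) * Q.comp (X - C (I / 2)) -
          P.comp (X - C (I / 2)) * Q.comp (X + C (I / 2)) = X ^ L)
    (Q' P' W₁ T₀ : Polynomial ℂ)
    (hQ' : Q' = Q.comp (X + C (I / 2)) - Q.comp (X - C (I / 2)))
    (hP' : P' = P.comp (X + C (I / 2)) - P.comp (X - C (I / 2)))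
    (hW₁ : W₁ = Q'.comp (X - C (I / 2)) * P'.comp (X + C (I / 2)) -
                Q'.comp (X + C (I / 2)) * P'.comp (X - C (I / 2)))
    (hT₀ : T₀ = P.comp (X + C I) * Q.comp (X - C I) -
                P.comp (X - C I) * Q.comp (X + C I)) :
    W₁ = (X + C (I / 2)) ^ L + (X - C (I / 2)) ^ L - T₀ := by
  have hW' : discreteWronskian (I / 2) P Q = X ^ L := hW
  have hW₁' : W₁ = discreteWronskian (I / 2) (centralDifference (I / 2) P)
      (centralDifference (I / 2) Q) := by
    rw [hW₁, hP', hQ', discreteWronskian, centralDifference, centralDifference]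
    ring
  have hT₀' : T₀ = discreteWronskian (2 * (I / 2)) P Q := by
    rw [hT₀, mul_div_cancel₀ I two_ne_zero, discreteWronskian]
  rw [hW₁', hT₀', discreteWronskian_centralDifference, hW', pow_comp, pow_comp, X_comp, X_comp]
end

section
/- Let Q ∈ ℂ[λ] be monic of degree K with distinct roots, and suppose the rational function R(λ) = λ^L / (Q(λ + i/2)Q(λ - i/2)) is such that T(λ)/(Q(λ+i)Q(λ-i)) = R(λ + i/2) + R(λ - i/2) for some polynomial T (the TQ relation). If s is a complex number such that s + i/2 and s - i/2 are both roots of Q, then in the partial fraction decomposition of R the coefficient c_s of 1/(λ - s)² vanishes. -/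
/-!
The TQ relation evaluated at a root `r` of `Q` reads
`0 = (r - d/2)^L Q(r + d) + (r + d/2)^L Q(r - d)` for `d = ±i`, so two roots `r - d`, `r` force a
third root `r + d` unless `r = d/2`. Starting from the string `s ± i/2` and walking in a direction
`d` along which the obstruction `s + m d = 0` never occurs produces infinitely many roots; hence
`s = 0`. Then `z = 0` is a simple zero of both `Q(z + i/2)` and `Q(z - i/2)`, and the factor `z^L`
kills what remains of the double pole.
-/

open Complex Polynomial Finset Filter Topology

namespace Polynomial

theorem Separable.exists_eval_eq_sub_mul {R : Type*} [CommRing R] [Nontrivial R] {p : R[X]}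
    (hp : p.Separable) {a : R} (ha : p.IsRoot a) :
    ∃ q : R[X], q.eval a ≠ 0 ∧ ∀ z, p.eval z = (z - a) * q.eval z := by
  have hp0 : p ≠ 0 := hp.ne_zero
  have hmult : rootMultiplicity a p = 1 :=
    le_antisymm (rootMultiplicity_le_one_of_separable hp a) ((rootMultiplicity_pos hp0).mpr ha)
  refine ⟨p /ₘ (X - C a) ^ rootMultiplicity a p,
    eval_divByMonic_pow_rootMultiplicity_ne_zero a hp0, fun z => ?_⟩
  conv_lhs => rw [← pow_mul_divByMonic_rootMultiplicity_eq p a]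
  simp [hmult]

end Polynomial

theorem tendsto_sub_sq_mul_div_eval_mul_eval {𝕜 : Type*} [NormedField 𝕜] {Q : 𝕜[X]}
    (hQ : Q.Separable) {f : 𝕜 → 𝕜} {s a b : 𝕜} (hf : Tendsto f (𝓝 s) (𝓝 0))
    (ha : Q.IsRoot (s + a)) (hb : Q.IsRoot (s + b)) :
    Tendsto (fun z => (z - s) ^ 2 * f z / (Q.eval (z + a) * Q.eval (z + b))) (𝓝[≠] s) (𝓝 0) := by
  obtain ⟨p, hpa, hp⟩ := hQ.exists_eval_eq_sub_mul ha
  obtain ⟨q, hqb, hq⟩ := hQ.exists_eval_eq_sub_mul hb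
  have hpq : Tendsto (fun z => p.eval (z + a) * q.eval (z + b)) (𝓝 s)
      (𝓝 (p.eval (s + a) * q.eval (s + b))) :=
    ((p.continuous.comp (continuous_add_const a)).mul
      (q.continuous.comp (continuous_add_const b))).tendsto s
  have hlim : Tendsto (fun z => f z / (p.eval (z + a) * q.eval (z + b))) (𝓝[≠] s) (𝓝 0) := by
    rw [← zero_div (p.eval (s + a) * q.eval (s + b))]
    exact (hf.div hpq (mul_ne_zero hpa hqb)).mono_left nhdsWithin_le_nhds
  refine hlim.congr' ?_
  filter_upwards [self_mem_nhdsWithin] with z (hz : z ≠ s)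
  have hzs : z - s ≠ 0 := sub_ne_zero.mpr hz
  rw [hp, hq, add_sub_add_right_eq_sub, add_sub_add_right_eq_sub]
  field_simp

section StringCenter

variable {L : ℕ} {Q T : ℂ[X]}
  (hTQ : T * Q = (X - C (I / 2)) ^ L * Q.comp (X + C I) + (X + C (I / 2)) ^ L * Q.comp (X - C I))
include hTQ

theorem eval_mul_eval_eq_of_TQ {d : ℂ} (hd : d = I ∨ d = -I) (r : ℂ) :
    T.eval r * Q.eval r = (r - d / 2) ^ L * Q.eval (r + d) + (r + d / 2) ^ L * Q.eval (r - d) := by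
  have h := congrArg (eval r) hTQ
  simp only [eval_mul, eval_add, eval_pow, eval_comp, eval_sub, eval_X, eval_C] at h
  rcases hd with rfl | rfl
  · exact h
  · rw [h, add_comm]
    ring_nf

theorem isRoot_add_of_TQ {d : ℂ} (hd : d = I ∨ d = -I) {r : ℂ} (hr : Q.IsRoot r)
    (hrd : Q.IsRoot (r - d)) (hr_ne : r - d / 2 ≠ 0) : Q.IsRoot (r + d) := by
  have h := eval_mul_eval_eq_of_TQ hTQ hd r
  rw [hr.eq_zero, hrd.eq_zero, mul_zero, mul_zero, add_zero, eq_comm] at h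
  exact (mul_eq_zero.mp h).resolve_left (pow_ne_zero L hr_ne)

theorem isRoot_string_of_TQ {d s : ℂ} (hd : d = I ∨ d = -I) (hsp : Q.IsRoot (s + d / 2))
    (hsm : Q.IsRoot (s - d / 2)) (hs : ∀ m : ℕ, s + m * d ≠ 0) (m : ℕ) :
    Q.IsRoot (s + d / 2 + m * d) := by
  suffices Q.IsRoot (s + d / 2 + m * d) ∧ Q.IsRoot (s + d / 2 + m * d - d) from this.1
  induction m with
  | zero =>
    exact ⟨by simpa using hsp, by rwa [show s + d / 2 + (0 : ℕ) * d - d = s - d / 2 by ring]⟩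
  | succ m ih =>
    have h := isRoot_add_of_TQ hTQ hd ih.1 ih.2 (by convert hs m using 1; ring)
    rw [show s + d / 2 + ((m + 1 : ℕ) : ℂ) * d = s + d / 2 + m * d + d by push_cast; ring]
    exact ⟨h, by rw [add_sub_cancel_right]; exact ih.1⟩

theorem string_center_eq_zero_of_TQ (hQ0 : Q ≠ 0) {s : ℂ} (hsp : Q.IsRoot (s + I / 2))
    (hsm : Q.IsRoot (s - I / 2)) : s = 0 := by
  by_contra hs
  obtain ⟨d, hd, hsd⟩ : ∃ d, (d = I ∨ d = -I) ∧ ∀ m : ℕ, s + m * d ≠ 0 := by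
    by_contra! h
    obtain ⟨m₁, h₁⟩ := h I (.inl rfl)
    obtain ⟨m₂, h₂⟩ := h (-I) (.inr rfl)
    have hsum : ((m₁ + m₂ : ℕ) : ℂ) * I = 0 := by push_cast; linear_combination h₁ - h₂
    have hm₁ : m₁ = 0 := by
      have : m₁ + m₂ = 0 := by exact_mod_cast (mul_eq_zero.mp hsum).resolve_right I_ne_zero
      omega
    exact hs (by simpa [hm₁] using h₁)
  have hd0 : d ≠ 0 := by rcases hd with rfl | rfl <;> simp
  have hsp' : Q.IsRoot (s + d / 2) := by
    rcases hd with rfl | rfl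
    exacts [hsp, by rwa [neg_div, ← sub_eq_add_neg]]
  have hsm' : Q.IsRoot (s - d / 2) := by
    rcases hd with rfl | rfl
    exacts [hsm, by rwa [neg_div, sub_neg_eq_add]]
  refine Set.infinite_of_injective_forall_mem (f := fun m : ℕ => s + d / 2 + m * d)
    (fun m n hmn => ?_) (isRoot_string_of_TQ hTQ hd hsp' hsm' hsd) (Q.finite_setOfPred_isRoot hQ0)
  exact_mod_cast mul_right_cancel₀ hd0 (add_left_cancel hmn)

end StringCenter

theorem double_pole_coefficient_vanishes_general (L K : ℕ) (hL : 0 < L)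
    (l : Fin K → ℂ) (hdist : Function.Injective l)
    (Q T : Polynomial ℂ) (hQ : Q = ∏ k : Fin K, (X - C (l k)))
    (hTQ : T * Q = (X - C (I / 2)) ^ L * Q.comp (X + C I) +
                   (X + C (I / 2)) ^ L * Q.comp (X - C I))
    (s : ℂ) (hsp : Q.eval (s + I / 2) = 0) (hsm : Q.eval (s - I / 2) = 0) :
    Tendsto (fun z : ℂ =>
        (z - s) ^ 2 * z ^ L / (Q.eval (z + I / 2) * Q.eval (z - I / 2)))
      (𝓝[≠] s) (𝓝 0) := by
  have hsep : Q.Separable := hQ ▸ separable_prod_X_sub_C_iff.mpr hdist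
  obtain rfl : s = 0 := string_center_eq_zero_of_TQ hTQ hsep.ne_zero hsp hsm
  have hpow : Tendsto (fun z : ℂ => z ^ L) (𝓝 0) (𝓝 0) :=
    (continuous_pow L).tendsto' 0 0 (zero_pow hL.ne')
  simpa only [sub_eq_add_neg] using
    tendsto_sub_sq_mul_div_eval_mul_eval hsep hpow hsp (by rwa [← sub_eq_add_neg])

/-- If `Q = ∏(λ - λ_k)` (distinct roots) satisfies the TQ relation with
polynomial `T`, and `s` is a string center (`Q(s+i/2) = Q(s-i/2) = 0`), then
the double-pole coefficient of `R(λ) = λ^L/(Q(λ+i/2)Q(λ-i/2))` at `s`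
vanishes: `(λ-s)² R(λ) → 0` as `λ → s`. -/
theorem double_pole_coefficient_vanishes (L K : ℕ) (hL : 0 < L) (hK : 0 < K)
    (l : Fin K → ℂ) (hdist : Function.Injective l)
    (Q T : Polynomial ℂ) (hQ : Q = ∏ k : Fin K, (X - C (l k)))
    (hTQ : T * Q = (X - C (I / 2)) ^ L * Q.comp (X + C I) +
                   (X + C (I / 2)) ^ L * Q.comp (X - C I))
    (s : ℂ) (hsp : Q.eval (s + I / 2) = 0) (hsm : Q.eval (s - I / 2) = 0) :
    Tendsto (fun z : ℂ =>
        (z - s) ^ 2 * z ^ L / (Q.eval (z + I / 2) * Q.eval (z - I / 2)))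
      (𝓝[≠] s) (𝓝 0) :=
  double_pole_coefficient_vanishes_general L K hL l hdist Q T hQ hTQ s hsp hsm
end

section
/- Let a_s, b_s⁺, b_s⁻ ∈ ℂ with a_s + b_s⁺ + b_s⁻ = 0, and let U(λ) = a_s/(λ - s) + b_s⁺/(λ - s - i) + b_s⁻/(λ - s + i). Then the rational function V(λ) = b_s⁻/(λ - s + i/2) - b_s⁺/(λ - s - i/2) satisfies U(λ) = V(λ + i/2) - V(λ - i/2). -/
open Complex

/-- Telescoping decomposition (rational case): if `a + b⁺ + b⁻ = 0`, then
`U(λ) = a/(λ-s) + b⁺/(λ-s-i) + b⁻/(λ-s+i)` equals `V(λ+i/2) - V(λ-i/2)` where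
`V(λ) = b⁻/(λ-s+i/2) - b⁺/(λ-s-i/2)`. -/
theorem telescoping_rational_case (s a bp bm : ℂ) (h : a + bp + bm = 0) :
    ∀ z : ℂ, z ≠ s → z ≠ s + I → z ≠ s - I →
      a / (z - s) + bp / (z - s - I) + bm / (z - s + I) =
        (bm / (z + I / 2 - s + I / 2) - bp / (z + I / 2 - s - I / 2)) -
        (bm / (z - I / 2 - s + I / 2) - bp / (z - I / 2 - s - I / 2)) := by
  intro z _ _ _
  -- The shifted denominators are `z - s + I`, `z - s`, `z - s`, `z - s - I`, so the two sides
  -- differ by `(a + bp + bm) / (z - s)`, with no need to clear denominators.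
  linear_combination (z - s)⁻¹ * h
end

section
/- Let s ∈ ℂ and a, b⁺, b⁻ ∈ ℂ with a + b⁺ + b⁻ ≠ 0. Then there is no rational function V(λ) ∈ ℂ(λ) such that a/(λ - s) + b⁺/(λ - s - i) + b⁻/(λ - s + i) = V(λ + i/2) - V(λ - i/2). -/
open Complex Polynomial

open Filter Asymptotics Bornology Topology

lemma eval_isLittleO : ∀ n (q r : Polynomial ℂ), q.natDegree = n → r.degree < q.degree →
    (fun x => r.eval x) =o[cobounded ℂ] (fun x => q.eval x) := by
  intro n
  induction n using Nat.strong_induction_on with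
  | _ n IH =>
    intro q r hn hlt
    by_cases hq : 0 < q.degree
    · obtain ⟨α, hα⟩ := Complex.exists_root hq
      obtain ⟨q', hq'⟩ := (dvd_iff_isRoot.mpr hα)
      have hq0 : q ≠ 0 := Polynomial.ne_zero_of_degree_gt hq
      have hq'0 : q' ≠ 0 := by rintro rfl; simp [hq'] at hq0
      have hmonic : (X - C α).Monic := monic_X_sub_C α
      set r' := r /ₘ (X - C α) with hr'def
      have hr : r = (X - C α) * r' + C (r.eval α) := by
        conv_lhs => rw [← modByMonic_add_div r (X - C α)]
        rw [modByMonic_X_sub_C_eq_C_eval]; ring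
      have hdegq : q.degree = 1 + q'.degree := by
        rw [hq', degree_mul, degree_X_sub_C]
      have hdr' : r'.degree < q'.degree := by
        by_cases hr'0 : r' = 0
        · rw [hr'0, degree_zero]
          exact bot_lt_iff_ne_bot.mpr (degree_eq_bot.not.mpr hq'0)
        · have h1 : ((X - C α) * r').degree = 1 + r'.degree := by
            rw [degree_mul, degree_X_sub_C]
          have h2 : (X - C α) * r' = r - C (r.eval α) := by
            rw [eq_sub_iff_add_eq, ← hr]
          have h3 : (r - C (r.eval α)).degree < q.degree :=
            lt_of_le_of_lt (degree_sub_le _ _)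
              (max_lt hlt (lt_of_le_of_lt degree_C_le hq))
          rw [h2] at h1
          rw [hdegq, h1] at h3
          exact (WithBot.add_lt_add_iff_left (by simp : (1 : WithBot ℕ) ≠ ⊥)).mp h3
      have hndeg : q'.natDegree < n := by
        have : q.natDegree = 1 + q'.natDegree := by
          rw [hq', natDegree_mul (X_sub_C_ne_zero α) hq'0, natDegree_X_sub_C]
        omega
      have hIH := IH q'.natDegree hndeg q' r' rfl hdr'
      have hterm1 : (fun x => (x - α) * r'.eval x) =o[cobounded ℂ]
          (fun x => (x - α) * q'.eval x) :=
        (isBigO_refl (fun x : ℂ => x - α) _).mul_isLittleO hIH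
      have hterm2 : (fun _ : ℂ => r.eval α) =o[cobounded ℂ] (fun x => q.eval x) :=
        isLittleO_const_left.mpr (Or.inr (q.tendsto_norm_atTop hq tendsto_norm_cobounded_atTop))
      have heq : (fun x : ℂ => q.eval x) = fun x => (x - α) * q'.eval x := by
        funext x; rw [hq']; simp
      calc (fun x => r.eval x) = fun x => (x - α) * r'.eval x + r.eval α := by
            funext x; conv_lhs => rw [hr]
            simp
        _ =o[cobounded ℂ] (fun x => q.eval x) := by
            refine IsLittleO.add ?_ hterm2
            rw [heq]; exact hterm1
    · push_neg at hq
      have hr0 : r = 0 := by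
        by_contra hr0
        have h2 : r.degree < 0 := lt_of_lt_of_le hlt hq
        exact hr0 (degree_eq_bot.mp (Nat.WithBot.lt_zero_iff.mp h2))
      simp only [hr0, eval_zero]
      exact isLittleO_zero _ _

-- norm of sequence tending to atTop
lemma norm_seq_atTop (e : ℂ) :
    Tendsto (fun n : ℕ => ‖(n : ℂ) + e‖) atTop atTop := by
  apply tendsto_atTop_mono (f := fun n : ℕ => (n : ℝ) + (-‖e‖))
  · intro n
    have h1 : ‖(n : ℂ)‖ ≤ ‖(n : ℂ) + e‖ + ‖e‖ := by
      calc ‖(n : ℂ)‖ = ‖((n : ℂ) + e) + (-e)‖ := by ring_nf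
        _ ≤ ‖(n : ℂ) + e‖ + ‖-e‖ := norm_add_le _ _
        _ = ‖(n : ℂ) + e‖ + ‖e‖ := by rw [norm_neg]
    have h2 : ‖(n : ℂ)‖ = (n : ℝ) := by
      simp
    linarith
  · exact tendsto_atTop_add_const_right _ _ tendsto_natCast_atTop_atTop

lemma tendsto_inv_linear (d e : ℂ) :
    Tendsto (fun n : ℕ => d / (I * ((n : ℂ) + e))) atTop (𝓝 0) := by
  have h1 : Tendsto (fun n : ℕ => I * ((n : ℂ) + e)) atTop (cobounded ℂ) := by
    rw [← tendsto_norm_atTop_iff_cobounded]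
    have : (fun n : ℕ => ‖I * ((n : ℂ) + e)‖) = fun n : ℕ => ‖(n : ℂ) + e‖ := by
      funext n; rw [norm_mul, Complex.norm_I, one_mul]
    rw [this]
    exact norm_seq_atTop e
  have h2 : Tendsto (fun n : ℕ => (I * ((n : ℂ) + e))⁻¹) atTop (𝓝 0) :=
    tendsto_inv₀_cobounded.comp h1
  simpa [div_eq_mul_inv] using h2.const_mul d

lemma norm_w_atTop (s e : ℂ) :
    Tendsto (fun m : ℕ => ‖s + I * ((m : ℂ) + e)‖) atTop atTop := by
  apply tendsto_atTop_mono (f := fun m : ℕ => ‖(m : ℂ) + e‖ + (-‖s‖))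
  · intro m
    have h1 : ‖I * ((m : ℂ) + e)‖ = ‖(m : ℂ) + e‖ := by
      rw [norm_mul, Complex.norm_I, one_mul]
    have h2 : ‖I * ((m : ℂ) + e)‖ ≤ ‖s + I * ((m : ℂ) + e)‖ + ‖s‖ := by
      calc ‖I * ((m : ℂ) + e)‖ = ‖(s + I * ((m : ℂ) + e)) + (-s)‖ := by ring_nf
        _ ≤ ‖s + I * ((m : ℂ) + e)‖ + ‖-s‖ := norm_add_le _ _
        _ = ‖s + I * ((m : ℂ) + e)‖ + ‖s‖ := by rw [norm_neg]
    linarith [h1 ▸ h2]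
  · exact tendsto_atTop_add_const_right _ _ (norm_seq_atTop e)

/-- If `a + b⁺ + b⁻ ≠ 0`, there is no rational function `V = p/q` such that
`a/(λ-s) + b⁺/(λ-s-i) + b⁻/(λ-s+i) = V(λ+i/2) - V(λ-i/2)` (wherever
everything is defined). -/
theorem no_rational_discrete_antiderivative (s a bp bm : ℂ)
    (h : a + bp + bm ≠ 0) :
    ¬ ∃ p q : Polynomial ℂ, q ≠ 0 ∧ ∀ z : ℂ,
      z ≠ s → z ≠ s + I → z ≠ s - I →
      q.eval (z + I / 2) ≠ 0 → q.eval (z - I / 2) ≠ 0 →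
      a / (z - s) + bp / (z - s - I) + bm / (z - s + I) =
        p.eval (z + I / 2) / q.eval (z + I / 2) -
        p.eval (z - I / 2) / q.eval (z - I / 2) := by
  rintro ⟨p, q, hq, hpq⟩
  have hc : q.leadingCoeff ≠ 0 := leadingCoeff_ne_zero.mpr hq
  set c := q.leadingCoeff with hcdef
  set q₁ : Polynomial ℂ := C c⁻¹ * q with hq₁def
  set p₁ : Polynomial ℂ := C c⁻¹ * p with hp₁def
  have hq₁monic : q₁.Monic := by
    rw [Monic, hq₁def, leadingCoeff_mul, leadingCoeff_C, inv_mul_cancel₀ hc]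
  have hq₁0 : q₁ ≠ 0 := hq₁monic.ne_zero
  obtain ⟨A, r, hdiv, hdegr⟩ : ∃ A r : Polynomial ℂ, r + q₁ * A = p₁ ∧ r.degree < q₁.degree :=
    ⟨p₁ /ₘ q₁, p₁ %ₘ q₁, modByMonic_add_div p₁ q₁, degree_modByMonic_lt p₁ hq₁monic⟩
  set w : ℕ → ℂ := fun m => s + I * ((m : ℂ) - 1/2) with hwdef
  set hh : ℕ → ℂ := fun m => r.eval (w m) / q₁.eval (w m) with hhdef
  -- decomposition of f = p/q
  have hfdecomp : ∀ m : ℕ, q.eval (w m) ≠ 0 →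
      p.eval (w m) / q.eval (w m) = A.eval (w m) + hh m := by
    intro m hm
    have hq1 : q₁.eval (w m) = c⁻¹ * q.eval (w m) := by simp [hq₁def]
    have hp1 : p₁.eval (w m) = c⁻¹ * p.eval (w m) := by simp [hp₁def]
    have hq1ne : q₁.eval (w m) ≠ 0 := by
      rw [hq1]; exact mul_ne_zero (inv_ne_zero hc) hm
    calc p.eval (w m) / q.eval (w m)
        = (c⁻¹ * p.eval (w m)) / (c⁻¹ * q.eval (w m)) :=
          (mul_div_mul_left _ _ (inv_ne_zero hc)).symm
      _ = p₁.eval (w m) / q₁.eval (w m) := by rw [hp1, hq1]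
      _ = (r.eval (w m) + q₁.eval (w m) * A.eval (w m)) / q₁.eval (w m) := by
          rw [← hdiv]; simp
      _ = A.eval (w m) + hh m := by
          simp only [hhdef]
          rw [add_div, mul_div_cancel_left₀ _ hq1ne]
          ring
  -- the norm of w tends to atTop
  have hwnorm : Tendsto (fun m : ℕ => ‖w m‖) atTop atTop := by
    have := norm_w_atTop s (-(1/2))
    simpa [hwdef, sub_eq_add_neg] using this
  have hwcb : Tendsto w atTop (cobounded ℂ) := tendsto_norm_atTop_iff_cobounded.mp hwnorm
  -- q doesn't vanish at w m eventually
  have hqroots : ∀ᶠ m in atTop, q.eval (w m) ≠ 0 := by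
    by_cases hdq : 0 < q.degree
    · have hn := q.tendsto_norm_atTop hdq hwnorm
      filter_upwards [hn.eventually_ge_atTop 1] with m hm
      intro h0; rw [h0] at hm; norm_num at hm
    · push_neg at hdq
      have hC : q = C (q.coeff 0) := eq_C_of_degree_le_zero hdq
      have h0 : q.coeff 0 ≠ 0 := fun hz => hq (by rw [hC, hz, map_zero])
      filter_upwards with m
      rw [hC]; simpa using h0
  -- hh tends to 0
  have hh0 : Tendsto hh atTop (𝓝 0) := by
    have hlo := eval_isLittleO q₁.natDegree q₁ r rfl hdegr
    exact hlo.tendsto_div_nhds_zero.comp hwcb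
  -- the sequence g
  set g : ℕ → ℂ := fun n => a / (I * (n : ℂ)) + bp / (I * ((n : ℂ) - 1))
      + bm / (I * ((n : ℂ) + 1)) with hgdef
  have hg0 : Tendsto g atTop (𝓝 0) := by
    have := ((tendsto_inv_linear a 0).add (tendsto_inv_linear bp (-1))).add
        (tendsto_inv_linear bm 1)
    simpa [hgdef, sub_eq_add_neg] using this
  -- the key equation
  have hkey : ∀ᶠ n : ℕ in atTop, g n =
      (p.eval (w (n+1)) / q.eval (w (n+1))) - (p.eval (w n) / q.eval (w n)) := by
    have hsh : ∀ᶠ n : ℕ in atTop, q.eval (w (n+1)) ≠ 0 :=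
      (tendsto_add_atTop_nat 1).eventually hqroots
    filter_upwards [hqroots, hsh, eventually_ge_atTop 2] with n hn1 hn2 hn
    set z : ℂ := s + I * (n : ℂ) with hzdef
    have hz1 : z + I/2 = w (n+1) := by
      rw [hzdef, hwdef]; push_cast; ring
    have hz2 : z - I/2 = w n := by
      rw [hzdef, hwdef]; push_cast; ring
    have hIn : ∀ k : ℕ, I * ((k:ℂ)) ≠ 0 → True := fun _ _ => trivial
    have hne1 : z ≠ s := by
      intro hcon
      have h1 : I * (n:ℂ) = 0 := by rw [hzdef] at hcon; linear_combination hcon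
      rcases mul_eq_zero.mp h1 with h2 | h2
      · exact I_ne_zero h2
      · exact (Nat.cast_ne_zero.mpr (by omega : n ≠ 0)) h2
    have hne2 : z ≠ s + I := by
      intro hcon
      have h1 : I * ((n:ℂ) - 1) = 0 := by rw [hzdef] at hcon; linear_combination hcon
      rcases mul_eq_zero.mp h1 with h2 | h2
      · exact I_ne_zero h2
      · have : ((n - 1 : ℕ) : ℂ) = 0 := by push_cast [Nat.cast_sub (by omega : 1 ≤ n)] at h2 ⊢; linear_combination h2
        exact (Nat.cast_ne_zero.mpr (by omega : n - 1 ≠ 0)) this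
    have hne3 : z ≠ s - I := by
      intro hcon
      have h1 : I * ((n:ℂ) + 1) = 0 := by rw [hzdef] at hcon; linear_combination hcon
      rcases mul_eq_zero.mp h1 with h2 | h2
      · exact I_ne_zero h2
      · have : ((n + 1 : ℕ) : ℂ) = 0 := by push_cast at h2 ⊢; linear_combination h2
        exact (Nat.cast_ne_zero.mpr (by omega : n + 1 ≠ 0)) this
    have hq1 : q.eval (z + I/2) ≠ 0 := by rw [hz1]; exact hn2
    have hq2 : q.eval (z - I/2) ≠ 0 := by rw [hz2]; exact hn1
    have heq := hpq z hne1 hne2 hne3 hq1 hq2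
    rw [hz1, hz2] at heq
    rw [show z - s - I = I * ((n:ℂ) - 1) from by rw [hzdef]; ring,
        show z - s + I = I * ((n:ℂ) + 1) from by rw [hzdef]; ring,
        show z - s = I * (n:ℂ) from by rw [hzdef]; ring] at heq
    simpa only [hgdef] using heq
  -- the polynomial part is constant along the lattice
  set zz : ℕ → ℂ := fun n => s + I * (n : ℂ) with hzzdef
  set B : Polynomial ℂ := A.comp (X + C (I/2)) - A.comp (X - C (I/2)) with hBdef
  have hBeval : ∀ y : ℂ, B.eval y = A.eval (y + I/2) - A.eval (y - I/2) := by
    intro y; simp [hBdef, eval_comp]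
  have hwz1 : ∀ n : ℕ, zz n + I/2 = w (n+1) := by
    intro n; rw [hzzdef, hwdef]; push_cast; ring
  have hwz2 : ∀ n : ℕ, zz n - I/2 = w n := by
    intro n; rw [hzzdef, hwdef]; push_cast; ring
  have hBn : ∀ n : ℕ, B.eval (zz n) = A.eval (w (n+1)) - A.eval (w n) := by
    intro n; rw [hBeval, hwz1, hwz2]
  have hshq : ∀ᶠ n : ℕ in atTop, q.eval (w (n+1)) ≠ 0 :=
    (tendsto_add_atTop_nat 1).eventually hqroots
  have hBev : ∀ᶠ n : ℕ in atTop, B.eval (zz n) = g n - hh (n+1) + hh n := by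
    filter_upwards [hkey, hqroots, hshq] with n hk h1 h2
    rw [hBn n, hk, hfdecomp n h1, hfdecomp (n+1) h2]
    ring
  have hhsh : Tendsto (fun n : ℕ => hh (n+1)) atTop (𝓝 0) :=
    hh0.comp (tendsto_add_atTop_nat 1)
  have htendB : Tendsto (fun n => B.eval (zz n)) atTop (𝓝 0) := by
    have := (hg0.sub hhsh).add hh0
    rw [show (0:ℂ) - 0 + 0 = 0 from by ring] at this
    exact this.congr' (hBev.mono fun n hn => hn.symm)
  have hzznorm : Tendsto (fun n : ℕ => ‖zz n‖) atTop atTop := by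
    have := norm_w_atTop s 0
    simpa [hzzdef] using this
  have hB0 : B = 0 := by
    rcases lt_or_ge 0 B.degree with hdB | hdB
    · exfalso
      have h1 := B.tendsto_norm_atTop hdB hzznorm
      have h2 : Tendsto (fun n => ‖B.eval (zz n)‖) atTop (𝓝 0) := by
        simpa using htendB.norm
      exact not_tendsto_atTop_of_tendsto_nhds h2 h1
    · have hBC : B = C (B.coeff 0) := eq_C_of_degree_le_zero hdB
      have hconst : Tendsto (fun _ : ℕ => B.coeff 0) atTop (𝓝 (B.coeff 0)) := tendsto_const_nhds
      have heq : (fun n => B.eval (zz n)) = fun _ : ℕ => B.coeff 0 := by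
        funext n; rw [hBC]; simp
      rw [heq] at htendB
      have : B.coeff 0 = 0 := tendsto_nhds_unique hconst htendB
      rw [hBC, this, map_zero]
  have hA : ∀ n : ℕ, A.eval (w (n+1)) = A.eval (w n) := by
    intro n
    have := hBn n
    rw [hB0, eval_zero] at this
    linear_combination -this
  -- now g n = hh (n+1) - hh n eventually
  have hfinal : ∀ᶠ n : ℕ in atTop, g n = hh (n+1) - hh n := by
    filter_upwards [hkey, hqroots, hshq] with n hk h1 h2
    rw [hk, hfdecomp n h1, hfdecomp (n+1) h2, hA n]
    ring
  obtain ⟨N, hN⟩ := eventually_atTop.mp hfinal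
  -- telescoping of g
  have hS : ∀ K : ℕ, ∑ k ∈ Finset.range K, g (N + k) = hh (N + K) - hh N := by
    intro K
    have hterm : ∀ k, g (N + k) = (fun j => hh (N + j)) (k+1) - (fun j => hh (N + j)) k := by
      intro k
      have := hN (N + k) (Nat.le_add_right N k)
      rw [this, show N + k + 1 = N + (k + 1) from by omega]
    rw [Finset.sum_congr rfl (fun k _ => hterm k), Finset.sum_range_sub (fun j => hh (N + j))]
    norm_num
  have hhshN : Tendsto (fun K : ℕ => hh (N + K)) atTop (𝓝 0) := by
    have := hh0.comp (tendsto_add_atTop_nat N)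
    simpa [Nat.add_comm, Function.comp_def] using this
  have hStend : Tendsto (fun K : ℕ => ∑ k ∈ Finset.range K, g (N + k)) atTop (𝓝 (0 - hh N)) := by
    have := hhshN.sub (tendsto_const_nhds (x := hh N))
    exact this.congr fun K => (hS K).symm
  -- telescoping of the bp and bm parts
  set β : ℕ → ℂ := fun m => bp / (I * ((m:ℂ) - 1)) with hβdef
  set γ : ℕ → ℂ := fun m => bm / (I * (m:ℂ)) with hγdef
  have hβcast : ∀ m : ℕ, β (m+1) = bp / (I * (m:ℂ)) := by
    intro m; rw [hβdef]; push_cast; ring_nf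
  have hγcast : ∀ m : ℕ, γ (m+1) = bm / (I * ((m:ℂ)+1)) := by
    intro m; rw [hγdef]; push_cast; ring_nf
  have hβ0 : Tendsto β atTop (𝓝 0) := by
    have := tendsto_inv_linear bp (-1)
    simpa [hβdef, sub_eq_add_neg] using this
  have hγ0 : Tendsto γ atTop (𝓝 0) := by
    have := tendsto_inv_linear bm 0
    simpa [hγdef] using this
  have hTβ : ∀ K : ℕ, ∑ k ∈ Finset.range K,
      (bp / (I * (((N + k : ℕ):ℂ) - 1)) - bp / (I * ((N + k : ℕ):ℂ)))
      = β N - β (N + K) := by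
    intro K
    have hterm : ∀ k, bp / (I * (((N + k : ℕ):ℂ) - 1)) - bp / (I * ((N + k : ℕ):ℂ))
        = (fun j => β (N + j)) k - (fun j => β (N + j)) (k+1) := by
      intro k
      simp only []
      rw [show N + (k+1) = (N + k) + 1 from by omega, hβcast (N+k), hβdef]
    rw [Finset.sum_congr rfl (fun k _ => hterm k), Finset.sum_range_sub' (fun j => β (N + j))]
    norm_num
  have hTγ : ∀ K : ℕ, ∑ k ∈ Finset.range K,
      (bm / (I * (((N + k : ℕ):ℂ) + 1)) - bm / (I * ((N + k : ℕ):ℂ)))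
      = γ (N + K) - γ N := by
    intro K
    have hterm : ∀ k, bm / (I * (((N + k : ℕ):ℂ) + 1)) - bm / (I * ((N + k : ℕ):ℂ))
        = (fun j => γ (N + j)) (k+1) - (fun j => γ (N + j)) k := by
      intro k
      simp only []
      rw [show N + (k+1) = (N + k) + 1 from by omega, hγcast (N+k), hγdef]
    rw [Finset.sum_congr rfl (fun k _ => hterm k), Finset.sum_range_sub (fun j => γ (N + j))]
    norm_num
  -- decomposition of g
  have hgsplit : ∀ m : ℕ, g m = (a + bp + bm) / (I * (m:ℂ))
      + (bp / (I * ((m:ℂ) - 1)) - bp / (I * (m:ℂ)))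
      + (bm / (I * ((m:ℂ) + 1)) - bm / (I * (m:ℂ))) := by
    intro m
    simp only [hgdef, add_div]
    ring
  -- partial sums of the harmonic-like series converge
  set T : ℕ → ℂ := fun K => ∑ k ∈ Finset.range K, (a + bp + bm) / (I * ((N + k : ℕ):ℂ)) with hTdef
  have hTtend : Tendsto T atTop (𝓝 ((0 - hh N) - (β N - 0) - (0 - γ N))) := by
    have hsum : ∀ K : ℕ, T K = (∑ k ∈ Finset.range K, g (N + k))
        - (β N - β (N + K)) - (γ (N + K) - γ N) := by
      intro K
      rw [← hTβ K, ← hTγ K, hTdef]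
      simp only [← Finset.sum_sub_distrib]
      apply Finset.sum_congr rfl
      intro k _
      rw [hgsplit (N + k)]
      ring
    have h1 : Tendsto (fun K : ℕ => β (N + K)) atTop (𝓝 0) := by
      have := hβ0.comp (tendsto_add_atTop_nat N)
      simpa [Nat.add_comm, Function.comp_def] using this
    have h2 : Tendsto (fun K : ℕ => γ (N + K)) atTop (𝓝 0) := by
      have := hγ0.comp (tendsto_add_atTop_nat N)
      simpa [Nat.add_comm, Function.comp_def] using this
    have := (hStend.sub ((tendsto_const_nhds (x := β N)).sub h1)).sub
      (h2.sub (tendsto_const_nhds (x := γ N)))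
    exact this.congr fun K => (hsum K).symm
  -- extract the harmonic series
  set d : ℂ := (a + bp + bm) * I⁻¹ with hddef
  have hd : d ≠ 0 := mul_ne_zero h (inv_ne_zero I_ne_zero)
  set U : ℕ → ℝ := fun K => ∑ k ∈ Finset.range K, (((N + k : ℕ):ℝ))⁻¹ with hUdef
  set L : ℂ := ((0 - hh N) - (β N - 0) - (0 - γ N)) with hLdef
  have hTU : ∀ K, T K = d * (U K : ℂ) := by
    intro K
    rw [hTdef, hUdef]
    push_cast
    rw [Finset.mul_sum]
    apply Finset.sum_congr rfl
    intro k _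
    rw [div_eq_mul_inv, mul_inv]
    ring
  have hUtend : Tendsto (fun K => (U K : ℂ)) atTop (𝓝 (d⁻¹ * L)) := by
    have h1 : Tendsto (fun K => d⁻¹ * T K) atTop (𝓝 (d⁻¹ * L)) := hTtend.const_mul d⁻¹
    refine h1.congr fun K => ?_
    rw [hTU K, inv_mul_cancel_left₀ hd]
  have hUre : Tendsto U atTop (𝓝 ((d⁻¹ * L).re)) := by
    have := (Complex.continuous_re.tendsto _).comp hUtend
    simpa [Function.comp_def] using this
  -- summability contradiction
  have hnonneg : ∀ k : ℕ, (0:ℝ) ≤ (((N + k : ℕ):ℝ))⁻¹ := fun k => by positivity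
  have hmono : Monotone U := by
    intro i j hij
    exact Finset.sum_le_sum_of_subset_of_nonneg (Finset.range_subset_range.mpr hij)
      (fun k _ _ => hnonneg k)
  have hbound : ∀ K, U K ≤ (d⁻¹ * L).re := fun K => hmono.ge_of_tendsto hUre K
  have hsummable : Summable (fun k : ℕ => (((N + k : ℕ):ℝ))⁻¹) :=
    summable_of_sum_range_le hnonneg hbound
  have hsummable' : Summable (fun n : ℕ => ((n:ℝ))⁻¹) := by
    rw [← summable_nat_add_iff N]
    simpa [Nat.add_comm] using hsummable
  exact Real.not_summable_natCast_inv hsummable'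
end
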